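/- arXiv:2301.05313 — 3 statements merged into one kernel-verified Lean document; each statement's English description precedes it below -/
import Mathlib

section
/- Let q be a prime power and let b be a positive integer. Let H_Y(d) = dim_{F_q} S_d − dim_{F_q} I_d be the Hilbert function of the set Y of F_q-rational points of P(1,1,b). Then the following identity of formal power series in t (with integer coefficients) holds: (1−t)²(1−t^b) · Σ_{d=0}^{∞} H_Y(d) t^d = 1 − t^{q+1} − 2t^{qb+1} + t^{qb+2} + t^{qb+q+1}. -/
/-! Over `F_q` the monomial `x^m` agrees, as a function on `F_q³`, with the monomial whose nonzero
exponents are reduced into `[1, q-1]` modulo `q - 1`, and the reduced monomials (all exponents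
`< q`) are linearly independent functions. A weighted homogeneous polynomial vanishing on
`F_q³ ∖ {0}` also vanishes at `0`, so `H_Y(d)` is the number of reduced exponents of monomials of
degree `d`: the single power of `x₃` when `b ∣ d`, and the triples `(a, c, k) ∈ [0, q)³` with
`(a, c) ≠ 0`, `a + c + bk ≤ d` and `a + c + bk ≡ d (mod q - 1)`. Hence the Hilbert series is
`1/(1-t^b) + ((1 + ⋯ + t^(q-1))² - 1)(1 + ⋯ + t^(b(q-1)))/(1-t^(q-1))`, and the identity is
algebra. -/

open MvPolynomial

noncomputable section

variable (F : Type) [Field F] [Fintype F]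

/-- The submodule of polynomials vanishing at every nonzero point of `F³`. -/
def vanishing : Submodule F (MvPolynomial (Fin 3) F) where
  carrier := {f | ∀ y : Fin 3 → F, y ≠ 0 → eval y f = 0}
  add_mem' := fun hf hg y hy => by simp [hf y hy, hg y hy]
  zero_mem' := fun y hy => by simp
  smul_mem' := fun c f hf y hy => by simp [MvPolynomial.smul_eval, hf y hy]

/-- `S_d`: the degree-`d` weighted-homogeneous piece (weights `1, 1, b`). -/
def Sd (b d : ℕ) : Submodule F (MvPolynomial (Fin 3) F) :=
  weightedHomogeneousSubmodule F ![1, 1, b] d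

/-- `I_d`: the degree-`d` piece of the vanishing ideal of `ℙ(1,1,b)(F_q)`. -/
def Id' (b d : ℕ) : Submodule F (MvPolynomial (Fin 3) F) := Sd F b d ⊓ vanishing F

/-- The Hilbert function `H_Y(d) = dim S_d − dim I_d` of `Y = ℙ(1,1,b)(F_q)`. -/
def HY (b d : ℕ) : ℕ :=
  Module.finrank F ↥(Sd F b d) - Module.finrank F ↥(Id' F b d)

universe u

/-- The exponent in `{0, 1, …, q - 1}` that `m` reduces to under `a ^ q = a`. -/
def reduceExponent (q m : ℕ) : ℕ := if m = 0 then 0 else (m - 1) % (q - 1) + 1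

section ReduceExponent

variable {q m e : ℕ}

@[simp] lemma reduceExponent_zero (q : ℕ) : reduceExponent q 0 = 0 := rfl

lemma reduceExponent_eq_zero_iff : reduceExponent q m = 0 ↔ m = 0 := by
  unfold reduceExponent; split_ifs <;> simp_all

lemma reduceExponent_lt (hq : 1 < q) (m : ℕ) : reduceExponent q m < q := by
  unfold reduceExponent; split_ifs
  · omega
  · have := Nat.mod_lt (m - 1) (show 0 < q - 1 by omega); omega

lemma reduceExponent_eq_iff (he : e < q) :
    reduceExponent q m = e ↔ ∃ j, m = e + (q - 1) * j ∧ (e = 0 → j = 0) := by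
  unfold reduceExponent
  constructor
  · intro h
    split_ifs at h with hm
    · exact ⟨0, by simp [hm, ← h]⟩
    · refine ⟨(m - 1) / (q - 1), ?_, by omega⟩
      have := Nat.div_add_mod (m - 1) (q - 1)
      omega
  · rintro ⟨j, rfl, hj⟩
    rcases Nat.eq_zero_or_pos e with rfl | he0
    · simp [hj rfl]
    · rw [if_neg (by omega), show e + (q - 1) * j - 1 = e - 1 + (q - 1) * j by omega,
        Nat.add_mul_mod_self_left, Nat.mod_eq_of_lt (by omega)]
      omega

lemma pow_reduceExponent {K : Type*} [Field K] [Fintype K] (a : K) (m : ℕ) :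
    a ^ reduceExponent (Fintype.card K) m = a ^ m := by
  have hlt := reduceExponent_lt (Fintype.one_lt_card (α := K)) m
  obtain ⟨j, hm, -⟩ := (reduceExponent_eq_iff hlt).mp rfl
  by_cases ha : a = 0
  · subst ha
    by_cases h0 : m = 0
    · simp [h0]
    · rw [zero_pow h0, zero_pow (mt reduceExponent_eq_zero_iff.mp h0)]
  · conv_rhs => rw [hm, pow_add, pow_mul, FiniteField.pow_card_sub_one_eq_one a ha, one_pow,
      mul_one]

end ReduceExponent

namespace PowerSeries

variable {R : Type*} [Ring R]

lemma one_sub_X_pow_mul_mk_dvd {k : ℕ} (hk : 0 < k) :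
    (1 - X ^ k) * mk (fun n => if k ∣ n then (1 : R) else 0) = 1 := by
  ext n
  rw [sub_mul, one_mul, map_sub, coeff_X_pow_mul', coeff_mk, coeff_mk, coeff_one]
  rcases Nat.eq_zero_or_pos n with rfl | hn
  · simp [hk.ne']
  by_cases hkn : k ≤ n
  · simp [hkn, hn.ne', Nat.dvd_sub_iff_left hkn dvd_rfl]
  · simp [hkn, hn.ne', Nat.not_dvd_of_pos_of_lt hn (not_le.mp hkn)]

lemma X_pow_mul_mk_dvd (s k : ℕ) :
    X ^ s * mk (fun n => if k ∣ n then (1 : R) else 0) =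
      mk fun n => if s ≤ n ∧ k ∣ n - s then 1 else 0 := by
  ext n
  rw [coeff_X_pow_mul', coeff_mk, coeff_mk, ite_and]

lemma mk_add (f g : ℕ → R) : mk (fun n => f n + g n) = mk f + mk g := by
  ext n; simp

lemma mk_sum {ι : Type*} (s : Finset ι) (f : ι → ℕ → R) :
    mk (fun n => ∑ i ∈ s, f i n) = ∑ i ∈ s, mk (f i) := by
  ext n; simp [map_sum]

end PowerSeries

open Classical in
lemma Set.ncard_eq_sum_ite_mem {α β : Type*} {f : α → β} (hf : Function.Injective f)
    {s : Finset α} {t : Set β} (ht : t ⊆ f '' s) :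
    t.ncard = ∑ a ∈ s, if f a ∈ t then 1 else 0 := by
  have : t = f '' ↑(s.filter (f · ∈ t)) := by
    ext x
    refine ⟨fun hx => ?_, fun ⟨a, ha, hax⟩ => hax ▸ (Finset.mem_filter.mp ha).2⟩
    obtain ⟨a, ha, rfl⟩ := ht hx
    exact ⟨a, Finset.mem_filter.mpr ⟨ha, hx⟩, rfl⟩
  rw [congrArg Set.ncard this, Set.ncard_image_of_injective _ hf, Set.ncard_coe_finset,
    Finset.card_filter]

lemma Submodule.finrank_span_eq_ncard {K M : Type*} [DivisionRing K] [AddCommGroup M]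
    [Module K M] {s : Set M} (hs : LinearIndepOn K id s) :
    Module.finrank K (span K s) = s.ncard := by
  rw [Module.finrank, rank_span_set hs]
  exact Nat.card_coe_set_eq s

lemma Submodule.finrank_map_add_finrank_inf_ker {K V W : Type*} [DivisionRing K]
    [AddCommGroup V] [Module K V] [AddCommGroup W] [Module K W] (f : V →ₗ[K] W)
    (S : Submodule K V) [FiniteDimensional K S] :
    Module.finrank K (S.map f) + Module.finrank K ↥(S ⊓ LinearMap.ker f) = Module.finrank K S := by
  have hker : LinearMap.ker (f.comp S.subtype) = (S ⊓ LinearMap.ker f).comap S.subtype := by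
    rw [LinearMap.ker_comp, comap_inf, comap_subtype_self, top_inf_eq]
  rw [← LinearMap.finrank_range_add_finrank_ker (f.comp S.subtype), LinearMap.range_comp,
    range_subtype, hker, (comapSubtypeEquivOfLe inf_le_left).finrank_eq]

lemma MvPolynomial.IsWeightedHomogeneous.eval_pow_mul {R σ : Type*} [CommSemiring R]
    {w : σ → ℕ} {φ : MvPolynomial σ R} {d : ℕ} (hφ : IsWeightedHomogeneous w φ d)
    (c : R) (y : σ → R) :
    eval (fun i => c ^ w i * y i) φ = c ^ d * eval y φ := by
  rw [eval_eq, eval_eq, Finset.mul_sum]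
  refine Finset.sum_congr rfl fun m hm => ?_
  have hwm : ∑ i ∈ m.support, w i * m i = d := by
    rw [← hφ (mem_support_iff.mp hm), Finsupp.weight_apply, Finsupp.sum]
    simp [mul_comm]
  simp only [mul_pow, Finset.prod_mul_distrib, ← pow_mul, Finset.prod_pow_eq_pow_sum, hwm]
  ring

section FiniteFieldEvaluation

variable {σ K : Type u} [Field K] [Fintype K]

def reduceMonomial (q : ℕ) (m : σ →₀ ℕ) : σ →₀ ℕ :=
  m.mapRange (reduceExponent q) (reduceExponent_zero q)

def reducedExponents (q : ℕ) (w : σ → ℕ) (d : ℕ) : Set (σ →₀ ℕ) :=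
  reduceMonomial q '' {m | Finsupp.weight w m = d}

lemma evalₗ_monomial_reduceMonomial (m : σ →₀ ℕ) :
    evalₗ K σ (monomial (reduceMonomial (Fintype.card K) m) 1) = evalₗ K σ (monomial m 1) := by
  ext x
  simp only [evalₗ_apply, eval_monomial, reduceMonomial, one_mul]
  rw [Finsupp.prod_mapRange_index fun _ => pow_zero _]
  simp only [pow_reduceExponent]

variable [Finite σ]

lemma injOn_evalₗ_restrictDegree :
    Set.InjOn (evalₗ K σ) (restrictDegree σ K (Fintype.card K - 1)) := by
  intro f hf g hg hfg
  rw [← sub_eq_zero]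
  refine eq_zero_of_eval_eq_zero σ K _ (fun x => ?_) (Submodule.sub_mem _ hf hg)
  simpa [sub_eq_zero] using congrFun hfg x

lemma linearIndepOn_evalₗ_monomial {T : Set (σ →₀ ℕ)}
    (hT : ∀ e ∈ T, ∀ i, e i < Fintype.card K) :
    LinearIndepOn K (fun e => evalₗ K σ (monomial e 1)) T := by
  have hmon : LinearIndepOn K (fun e => monomial e (1 : K)) T := by
    simpa using (basisMonomials σ K).linearIndependent.linearIndepOn (s := T)
  refine hmon.map_injOn (evalₗ K σ) (injOn_evalₗ_restrictDegree.mono ?_)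
  rw [← restrictSupport_eq_span, restrictDegree]
  refine restrictSupport_mono K fun e he i => ?_
  have := hT e he i
  omega

lemma finrank_map_evalₗ_weightedHomogeneousSubmodule (w : σ → ℕ) (d : ℕ) :
    Module.finrank K (Submodule.map (evalₗ K σ) (weightedHomogeneousSubmodule K w d)) =
      (reducedExponents (Fintype.card K) w d).ncard := by
  have hT : ∀ e ∈ reducedExponents (Fintype.card K) w d, ∀ i, e i < Fintype.card K := by
    rintro _ ⟨m, -, rfl⟩ i
    exact reduceExponent_lt Fintype.one_lt_card (m i)
  have hspan : Submodule.map (evalₗ K σ) (weightedHomogeneousSubmodule K w d) =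
      Submodule.span K
        ((fun e => evalₗ K σ (monomial e 1)) '' reducedExponents (Fintype.card K) w d) := by
    rw [weightedHomogeneousSubmodule_eq_finsupp_supported,
      AddMonoidAlgebra.supported_eq_span_single, Submodule.map_span, reducedExponents,
      Set.image_image, Set.image_image]
    simp only [single_eq_monomial, evalₗ_monomial_reduceMonomial]
  have hind := linearIndepOn_evalₗ_monomial hT
  rw [hspan, Submodule.finrank_span_eq_ncard hind.id_image, hind.injOn.ncard_image]

end FiniteFieldEvaluation

omit [Fintype F] in
lemma Id'_eq_inf_ker {b : ℕ} (hb : 0 < b) (d : ℕ) :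
    Id' F b d = Sd F b d ⊓ LinearMap.ker (evalₗ F (Fin 3)) := by
  ext f
  refine and_congr_right fun hf => ⟨fun hvan => funext fun y => ?_, fun hker y _ => congrFun hker y⟩
  rcases eq_or_ne y 0 with rfl | hy
  · -- weighted homogeneity gives `f 0 = 0 ^ d * f 1`
    have hscale := hf.eval_pow_mul 0 1
    have hzero : (fun i => (0 : F) ^ (![1, 1, b] : Fin 3 → ℕ) i * (1 : Fin 3 → F) i) = 0 := by
      ext i; fin_cases i <;> simp [hb.ne']
    rwa [hzero, hvan 1 one_ne_zero, mul_zero] at hscale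
  · exact hvan y hy

lemma HY_eq_ncard_reducedExponents {b : ℕ} (hb : 0 < b) (d : ℕ) :
    HY F b d = (reducedExponents (Fintype.card F) ![1, 1, b] d).ncard := by
  have : FiniteDimensional F (Sd F b d) := Module.Finite.iff_fg.mpr <|
    weightedHomogeneousSubmodule_fg F _ (fun i => by fin_cases i <;> simp [hb.ne']) d
  rw [← finrank_map_evalₗ_weightedHomogeneousSubmodule, HY, Id'_eq_inf_ker F hb,
    ← Submodule.finrank_map_add_finrank_inf_ker (evalₗ F (Fin 3)) (Sd F b d), Nat.add_sub_cancel]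
  rfl

/-- The exponents of the two weight-one variables are grouped together. -/
def exponentOfTriple (t : (ℕ × ℕ) × ℕ) : Fin 3 →₀ ℕ :=
  Finsupp.equivFunOnFinite.symm ![t.1.1, t.1.2, t.2]

lemma exponentOfTriple_injective : Function.Injective exponentOfTriple := by
  rintro ⟨⟨a, c⟩, k⟩ ⟨⟨a', c'⟩, k'⟩ h
  have h0 := DFunLike.congr_fun h 0
  have h1 := DFunLike.congr_fun h 1
  have h2 := DFunLike.congr_fun h 2
  simp_all [exponentOfTriple]

section WeightsOneOneB

variable {q b d a c k : ℕ}

lemma exponentOfTriple_mem_reducedExponents_iff :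
    exponentOfTriple ((a, c), k) ∈ reducedExponents q ![1, 1, b] d ↔
      ∃ m₀ m₁ m₂, m₀ + m₁ + b * m₂ = d ∧ reduceExponent q m₀ = a ∧ reduceExponent q m₁ = c ∧
        reduceExponent q m₂ = k := by
  have hweight : ∀ m : Fin 3 →₀ ℕ, Finsupp.weight ![1, 1, b] m = m 0 + m 1 + b * m 2 := by
    intro m
    simp [Finsupp.weight_eq_sum, Fin.sum_univ_three, mul_comm]
  constructor
  · rintro ⟨m, hm, he⟩
    refine ⟨m 0, m 1, m 2, (hweight m).symm.trans hm, ?_, ?_, ?_⟩ <;>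
      [have := DFunLike.congr_fun he 0; have := DFunLike.congr_fun he 1;
        have := DFunLike.congr_fun he 2] <;>
      simpa [reduceMonomial, exponentOfTriple] using this
  · rintro ⟨m₀, m₁, m₂, hm, rfl, rfl, rfl⟩
    refine ⟨exponentOfTriple ((m₀, m₁), m₂), by simpa [hweight, exponentOfTriple] using hm, ?_⟩
    ext i
    fin_cases i <;> simp [reduceMonomial, exponentOfTriple]

lemma exponentOfTriple_zero_mem_reducedExponents_iff (hb : 0 < b) :
    exponentOfTriple ((0, 0), k) ∈ reducedExponents q ![1, 1, b] d ↔
      b ∣ d ∧ reduceExponent q (d / b) = k := by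
  rw [exponentOfTriple_mem_reducedExponents_iff]
  constructor
  · rintro ⟨m₀, m₁, m₂, rfl, h₀, h₁, rfl⟩
    rw [reduceExponent_eq_zero_iff] at h₀ h₁
    subst h₀ h₁
    simp [Nat.mul_div_cancel_left _ hb]
  · rintro ⟨⟨m, rfl⟩, rfl⟩
    exact ⟨0, 0, m, by simp, rfl, rfl, by rw [Nat.mul_div_cancel_left _ hb]⟩

lemma exponentOfTriple_mem_reducedExponents_iff_of_ne (ha : a < q) (hc : c < q) (hk : k < q)
    (hac : (a, c) ≠ (0, 0)) :
    exponentOfTriple ((a, c), k) ∈ reducedExponents q ![1, 1, b] d ↔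
      a + c + b * k ≤ d ∧ q - 1 ∣ d - (a + c + b * k) := by
  rw [exponentOfTriple_mem_reducedExponents_iff]
  constructor
  · rintro ⟨m₀, m₁, m₂, rfl, h₀, h₁, h₂⟩
    obtain ⟨j₀, rfl, -⟩ := (reduceExponent_eq_iff ha).mp h₀
    obtain ⟨j₁, rfl, -⟩ := (reduceExponent_eq_iff hc).mp h₁
    obtain ⟨j₂, rfl, -⟩ := (reduceExponent_eq_iff hk).mp h₂
    rw [show a + (q - 1) * j₀ + (c + (q - 1) * j₁) + b * (k + (q - 1) * j₂) =
      a + c + b * k + (q - 1) * (j₀ + j₁ + b * j₂) by ring, Nat.add_sub_cancel_left]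
    exact ⟨Nat.le_add_right _ _, Dvd.intro _ rfl⟩
  · rintro ⟨hle, j, hj⟩
    have hd : d = a + c + b * k + (q - 1) * j := by omega
    have hred : ∀ {e}, e < q → reduceExponent q e = e := fun he =>
      (reduceExponent_eq_iff he).mpr ⟨0, by simp, fun _ => rfl⟩
    have hred' : ∀ {e}, e < q → e ≠ 0 → reduceExponent q (e + (q - 1) * j) = e := fun he he0 =>
      (reduceExponent_eq_iff he).mpr ⟨j, rfl, fun h => absurd h he0⟩
    by_cases ha0 : a = 0
    · have hc0 : c ≠ 0 := fun hc0 => hac (by rw [ha0, hc0])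
      exact ⟨a, c + (q - 1) * j, k, by rw [hd]; ring, hred ha, hred' hc hc0, hred hk⟩
    · exact ⟨a + (q - 1) * j, c, k, by rw [hd]; ring, hred' ha ha0, hred hc, hred hk⟩

lemma reducedExponents_subset_image (hq : 1 < q) :
    reducedExponents q ![1, 1, b] d ⊆
      exponentOfTriple '' ↑((Finset.range q ×ˢ Finset.range q) ×ˢ Finset.range q) := by
  rintro _ ⟨m, -, rfl⟩
  refine ⟨((reduceExponent q (m 0), reduceExponent q (m 1)), reduceExponent q (m 2)), ?_, ?_⟩
  · simp [reduceExponent_lt hq]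
  · ext i
    fin_cases i <;> simp [reduceMonomial, exponentOfTriple]

lemma ncard_reducedExponents (hq : 1 < q) (hb : 0 < b) :
    (reducedExponents q ![1, 1, b] d).ncard = (if b ∣ d then 1 else 0) +
      ∑ t ∈ ((Finset.range q ×ˢ Finset.range q).erase (0, 0)) ×ˢ Finset.range q,
        if t.1.1 + t.1.2 + b * t.2 ≤ d ∧ q - 1 ∣ d - (t.1.1 + t.1.2 + b * t.2) then 1 else 0 := by
  classical
  have h00 : ((0, 0) : ℕ × ℕ) ∈ Finset.range q ×ˢ Finset.range q := by simp; omega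
  rw [Set.ncard_eq_sum_ite_mem exponentOfTriple_injective (reducedExponents_subset_image hq),
    Finset.sum_product, ← Finset.add_sum_erase _ _ h00, Finset.sum_product]
  congr 1
  · simp_rw [exponentOfTriple_zero_mem_reducedExponents_iff hb]
    by_cases hbd : b ∣ d
    · simp [hbd, reduceExponent_lt hq]
    · simp [hbd]
  · refine Finset.sum_congr rfl fun p hp => Finset.sum_congr rfl fun k hk => ?_
    obtain ⟨hp0, hp⟩ := Finset.mem_erase.mp hp
    rw [Finset.mem_product, Finset.mem_range, Finset.mem_range] at hp
    have hk := Finset.mem_range.mp hk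
    exact if_congr (exponentOfTriple_mem_reducedExponents_iff_of_ne hp.1 hp.2 hk hp0) rfl rfl

end WeightsOneOneB

lemma mk_ncard_reducedExponents {q b : ℕ} (hq : 1 < q) (hb : 0 < b) :
    PowerSeries.mk (fun d => ((reducedExponents q ![1, 1, b] d).ncard : ℤ)) =
      PowerSeries.mk (fun n => if b ∣ n then 1 else 0) +
        ((∑ i ∈ Finset.range q, PowerSeries.X ^ i) ^ 2 - 1) *
          (∑ i ∈ Finset.range q, (PowerSeries.X ^ b) ^ i) *
            PowerSeries.mk (fun n => if q - 1 ∣ n then 1 else 0) := by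
  have h00 : ((0, 0) : ℕ × ℕ) ∈ Finset.range q ×ˢ Finset.range q := by simp; omega
  simp_rw [ncard_reducedExponents hq hb]
  push_cast
  simp_rw [PowerSeries.mk_add, PowerSeries.mk_sum, ← PowerSeries.X_pow_mul_mk_dvd,
    ← Finset.sum_mul, Finset.sum_product, pow_add, ← Finset.mul_sum, ← Finset.sum_mul, pow_mul]
  rw [Finset.sum_erase_eq_sub h00, Finset.sum_product, ← Finset.sum_mul_sum, sq]
  simp

lemma one_sub_X_sq_mul_one_sub_X_pow_mul_mk_ncard_reducedExponents {q b : ℕ} (hq : 1 < q)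
    (hb : 0 < b) :
    (1 - PowerSeries.X) ^ 2 * (1 - PowerSeries.X ^ b) *
        PowerSeries.mk (fun d => ((reducedExponents q ![1, 1, b] d).ncard : ℤ)) =
      1 - PowerSeries.X ^ (q + 1) - 2 * PowerSeries.X ^ (q * b + 1)
        + PowerSeries.X ^ (q * b + 2) + PowerSeries.X ^ (q * b + q + 1) := by
  have hV := PowerSeries.one_sub_X_pow_mul_mk_dvd (R := ℤ) hb
  have hU := PowerSeries.one_sub_X_pow_mul_mk_dvd (R := ℤ) (show 0 < q - 1 by omega)
  have hG := mul_neg_geom_sum (PowerSeries.X : PowerSeries ℤ) q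
  have hGb := mul_neg_geom_sum ((PowerSeries.X : PowerSeries ℤ) ^ b) q
  rw [mk_ncard_reducedExponents hq hb]
  obtain ⟨c, rfl⟩ : ∃ c, q = c + 1 := ⟨q - 1, by omega⟩
  simp only [Nat.add_sub_cancel] at hU ⊢
  set X : PowerSeries ℤ := PowerSeries.X
  set G := ∑ i ∈ Finset.range (c + 1), X ^ i
  set U := PowerSeries.mk (fun n => if c ∣ n then (1 : ℤ) else 0)
  -- `(1 - X)² (G² - 1) = X (1 - X^c) (2 - X - X^(c+1))` cancels the denominator `1 - X^c` of `U`
  linear_combination (1 - X) ^ 2 * hV + (1 - X) ^ 2 * (G ^ 2 - 1) * U * hGb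
    + (1 - (X ^ b) ^ (c + 1)) * U * ((1 - X) * G + 1 - X ^ (c + 1)) * hG
    + X * (2 - X - X ^ (c + 1)) * (1 - (X ^ b) ^ (c + 1)) * hU

/-- Theorem (Hilbert series of `ℙ(1,1,b)(F_q)`):
`(1−t)²(1−t^b)·Σ H_Y(d) t^d = 1 − t^{q+1} − 2t^{qb+1} + t^{qb+2} + t^{qb+q+1}`. -/
theorem hilbert_series_P11b (q : ℕ) (hq : q = Fintype.card F) (b : ℕ) (hb : 0 < b) :
    (1 - PowerSeries.X) ^ 2 * (1 - PowerSeries.X ^ b) *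
        PowerSeries.mk (fun d => (HY F b d : ℤ)) =
      1 - PowerSeries.X ^ (q + 1) - 2 * PowerSeries.X ^ (q * b + 1)
        + PowerSeries.X ^ (q * b + 2) + PowerSeries.X ^ (q * b + q + 1) := by
  subst hq
  simp_rw [HY_eq_ncard_reducedExponents F hb]
  exact one_sub_X_sq_mul_one_sub_X_pow_mul_mk_ncard_reducedExponents Fintype.one_lt_card hb

end
end

section
/- Let q be a prime power and let b be a positive integer with q ≤ b. Let H_Y be the Hilbert function of the set Y of F_q-rational points of P(1,1,b). Write d = d₀b + r₀ with d₀, r₀ ∈ ℕ and 0 ≤ r₀ < b. Then: H_Y(d) = d₀(q+1) + r₀ + 1 if 0 ≤ d₀ ≤ q−1 and 0 ≤ r₀ ≤ q−1; H_Y(d) = (d₀+1)(q+1) if 0 ≤ d₀ ≤ q−1 and q ≤ r₀ < b; H_Y(d) = q(q+1) if d₀ ≥ q and 0 < r₀ < b; and H_Y(d) = q(q+1) + 1 if d₀ ≥ q and r₀ = 0. -/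
open MvPolynomial

noncomputable section

variable (F : Type) [Field F] [Fintype F]

namespace HilbAux

/-- reduction of an exponent modulo `q-1`, keeping `0 ↦ 0` and positive ↦ in `[1,q-1]`. -/
def red (q m : ℕ) : ℕ := if m = 0 then 0 else (m - 1) % (q - 1) + 1

variable {q : ℕ}

@[simp] lemma red_zero : red q 0 = 0 := rfl

lemma red_pos {m : ℕ} (hm : m ≠ 0) : 0 < red q m := by simp [red, hm]

lemma red_lt (hq : 2 ≤ q) (m : ℕ) : red q m < q := by
  unfold red
  split
  · omega
  · have : (m - 1) % (q - 1) < q - 1 := Nat.mod_lt _ (by omega)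
    omega

lemma red_le (hq : 2 ≤ q) (m : ℕ) : red q m ≤ q - 1 := by
  have := red_lt (q := q) hq m; omega

lemma red_eq_self {m : ℕ} (hm : m ≤ q - 1) : red q m = m := by
  unfold red
  split
  · omega
  · have h1 : 1 ≤ m := by omega
    have : m - 1 < q - 1 := by omega
    rw [Nat.mod_eq_of_lt this]; omega

lemma red_modeq {m : ℕ} (hm : m ≠ 0) : red q m ≡ m [MOD q - 1] := by
  unfold red
  rw [if_neg hm]
  have h1 : (m - 1) % (q - 1) ≡ m - 1 [MOD q - 1] := Nat.mod_modEq _ _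
  have h2 := h1.add_right 1
  have : m - 1 + 1 = m := by omega
  rwa [this] at h2

lemma red_eq_red {m n : ℕ} (hm : m ≠ 0) (hn : n ≠ 0) (h : m ≡ n [MOD q - 1]) :
    red q m = red q n := by
  unfold red
  rw [if_neg hm, if_neg hn]
  have : m - 1 ≡ n - 1 [MOD q - 1] := by
    have := (h.add_right 1)
    have e1 : m + 1 = (m - 1) + 1 + 1 := by omega
    have e2 : n + 1 = (n - 1) + 1 + 1 := by omega
    have h' : m - 1 + 1 + 1 ≡ n - 1 + 1 + 1 [MOD q - 1] := by rwa [e1, e2] at this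
    exact (Nat.ModEq.add_right_cancel' 1 (Nat.ModEq.add_right_cancel' 1 h'))
  unfold Nat.ModEq at this
  omega

end HilbAux

namespace HilbAux

variable {q : ℕ}

/-- parameter-to-exponent: `j < q` means first exponent `j`; `j = q` means all of `M`. -/
def A (q M j : ℕ) : ℕ := if j = q then M else j

lemma A_le {M j : ℕ} (hq : 2 ≤ q) (hM : q ≤ M) (hj : j < q + 1) : A q M j ≤ M := by
  unfold A
  split
  · exact le_rfl
  · omega

lemma pair_param (hq : 2 ≤ q) {M N a c : ℕ} (hM : q ≤ M) (hN : 1 ≤ N)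
    (hcong : N ≡ M [MOD q - 1]) (h : a + c = N) :
    ∃ j, j < q + 1 ∧ red q a = red q (A q M j) ∧ red q c = red q (M - A q M j) := by
  rcases Nat.eq_zero_or_pos a with ha | ha
  · refine ⟨0, by omega, ?_, ?_⟩
    · have : A q M 0 = 0 := by unfold A; rw [if_neg (by omega)]
      rw [ha, this]
    · have h0 : A q M 0 = 0 := by unfold A; rw [if_neg (by omega)]
      rw [h0, Nat.sub_zero]
      have hc : c = N := by omega
      subst hc
      exact red_eq_red (by omega) (by omega) hcong
  rcases Nat.eq_zero_or_pos c with hc | hc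
  · refine ⟨q, by omega, ?_, ?_⟩
    · have hA : A q M q = M := by unfold A; simp
      rw [hA]
      have ha' : a = N := by omega
      subst ha'
      exact red_eq_red (by omega) (by omega) hcong
    · have hA : A q M q = M := by unfold A; simp
      rw [hA, Nat.sub_self, hc]
  · refine ⟨red q a, ?_, ?_, ?_⟩
    · have := red_lt hq a; omega
    · have hj : A q M (red q a) = red q a := by
        unfold A
        have := red_lt hq a; rw [if_neg (by omega)]
      rw [hj, red_eq_self (red_le hq a)]
    · have hj : A q M (red q a) = red q a := by
        unfold A
        have := red_lt hq a; rw [if_neg (by omega)]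
      rw [hj]
      -- show red q c = red q (M - red q a)
      have hra := red_pos (q := q) (by omega : a ≠ 0)
      have hrle := red_le hq a
      have hMa : 1 ≤ M - red q a := by omega
      refine red_eq_red (by omega) (by omega) ?_
      -- c ≡ M - red q a [MOD q-1]
      have h1 : a ≡ red q a [MOD q - 1] := (red_modeq (by omega)).symm
      have h2 : (M - red q a) + red q a = M := by omega
      have h3 : c + red q a ≡ c + a [MOD q - 1] := Nat.ModEq.add_left c h1.symm
      have h4 : c + a = N := by omega
      have h5 : c + red q a ≡ M [MOD q - 1] := by
        calc c + red q a ≡ c + a [MOD q - 1] := h3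
        _ = N := h4
        _ ≡ M [MOD q - 1] := hcong
      have h6 : c + red q a ≡ (M - red q a) + red q a [MOD q - 1] := by rw [h2]; exact h5
      exact Nat.ModEq.add_right_cancel' _ h6

end HilbAux

namespace HilbAux

variable {q b d₀ r₀ : ℕ}

def Nc (b d₀ r₀ c : ℕ) : ℕ := (d₀ - c) * b + r₀

def Φ (q b d₀ r₀ : ℕ) (p : ℕ × ℕ) : Fin 3 → ℕ :=
  ![red q (A q (Nc b d₀ r₀ p.1) p.2),
    red q (Nc b d₀ r₀ p.1 - A q (Nc b d₀ r₀ p.1) p.2),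
    red q p.1]

def Rset (q b d : ℕ) : Set (Fin 3 → ℕ) :=
  {e | ∃ a a' c : ℕ, a + a' + b * c = d ∧ e = ![red q a, red q a', red q c]}

lemma Nc_add_eq {c : ℕ} (hc : c ≤ d₀) : Nc b d₀ r₀ c + b * c = d₀ * b + r₀ := by
  have h : d₀ - c + c = d₀ := Nat.sub_add_cancel hc
  calc (d₀ - c) * b + r₀ + b * c = ((d₀ - c) + c) * b + r₀ := by ring
    _ = d₀ * b + r₀ := by rw [h]

lemma c_le_d0 (hb0 : 0 < b) (hr : r₀ < b) {a a' c : ℕ}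
    (h : a + a' + b * c = d₀ * b + r₀) : c ≤ d₀ := by
  by_contra hc
  have h1 : b * (d₀ + 1) ≤ b * c := Nat.mul_le_mul_left b (by omega)
  have h2 : b * (d₀ + 1) = d₀ * b + b := by ring
  have h3 : d₀ * b + b ≤ b * c := h2 ▸ h1
  have h4 : b * c ≤ d₀ * b + r₀ := by omega
  omega

lemma sum_eq_Nc (hb0 : 0 < b) (hr : r₀ < b) {a a' c : ℕ}
    (h : a + a' + b * c = d₀ * b + r₀) : a + a' = Nc b d₀ r₀ c := by
  have hc := c_le_d0 hb0 hr h
  have h2 := Nc_add_eq (b := b) (r₀ := r₀) hc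
  omega

lemma q_le_Nc (hqb : q ≤ b) {c : ℕ} (hcd : c < d₀) : q ≤ Nc b d₀ r₀ c := by
  have h1 : 1 * b ≤ (d₀ - c) * b := Nat.mul_le_mul_right b (by omega)
  unfold Nc; omega

lemma Φ_mem_Rset {c j : ℕ} (hc : c ≤ d₀)
    (hA : A q (Nc b d₀ r₀ c) j ≤ Nc b d₀ r₀ c) :
    Φ q b d₀ r₀ (c, j) ∈ Rset q b (d₀ * b + r₀) := by
  refine ⟨A q (Nc b d₀ r₀ c) j, Nc b d₀ r₀ c - A q (Nc b d₀ r₀ c) j, c, ?_, rfl⟩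
  have h1 : A q (Nc b d₀ r₀ c) j + (Nc b d₀ r₀ c - A q (Nc b d₀ r₀ c) j) = Nc b d₀ r₀ c := by
    omega
  rw [h1]
  exact Nc_add_eq hc

/-- injectivity within a full layer -/
lemma inj_layer (hq : 2 ≤ q) {M j j' : ℕ} (hM : q ≤ M) (hj : j < q + 1) (hj' : j' < q + 1)
    (h1 : red q (A q M j) = red q (A q M j'))
    (h2 : red q (M - A q M j) = red q (M - A q M j')) : j = j' := by
  have eAq : A q M q = M := by unfold A; simp
  have eA : ∀ k, k ≠ q → A q M k = k := fun k hk => by unfold A; rw [if_neg hk]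
  by_cases hjq : j = q
  · by_cases hj'q : j' = q
    · rw [hjq, hj'q]
    · exfalso
      rw [hjq, eAq, eA j' hj'q, Nat.sub_self] at h2
      have hpos : 0 < red q (M - j') := red_pos (by omega)
      rw [← h2] at hpos
      simp at hpos
  · by_cases hj'q : j' = q
    · exfalso
      rw [hj'q, eAq, eA j hjq, Nat.sub_self] at h2
      have hpos : 0 < red q (M - j) := red_pos (by omega)
      rw [h2] at hpos
      simp at hpos
    · rw [eA j hjq, eA j' hj'q, red_eq_self (by omega), red_eq_self (by omega)] at h1
      exact h1

@[simp] lemma Φ_two (p : ℕ × ℕ) : Φ q b d₀ r₀ p 2 = red q p.1 := rfl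
@[simp] lemma Φ_zero (p : ℕ × ℕ) : Φ q b d₀ r₀ p 0 = red q (A q (Nc b d₀ r₀ p.1) p.2) := rfl
@[simp] lemma Φ_one (p : ℕ × ℕ) :
    Φ q b d₀ r₀ p 1 = red q (Nc b d₀ r₀ p.1 - A q (Nc b d₀ r₀ p.1) p.2) := rfl

end HilbAux

namespace HilbAux

variable {q b d₀ r₀ : ℕ}

lemma Rset_eq₂ (hq2 : 2 ≤ q) (hqb : q ≤ b) (hqr : q ≤ r₀) (hr : r₀ < b) :
    Rset q b (d₀ * b + r₀) =
      ↑((Finset.range (d₀+1) ×ˢ Finset.range (q+1)).image (Φ q b d₀ r₀)) := by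
  have hb0 : 0 < b := by omega
  apply Set.Subset.antisymm
  · rintro e ⟨a, a', c, h, rfl⟩
    have hc : c ≤ d₀ := c_le_d0 hb0 hr h
    have hsum : a + a' = Nc b d₀ r₀ c := sum_eq_Nc hb0 hr h
    have hM : q ≤ Nc b d₀ r₀ c := by unfold Nc; omega
    obtain ⟨j, hj, h1, h2⟩ := pair_param hq2 hM (by omega) (Nat.ModEq.refl _) hsum
    refine Finset.mem_coe.mpr (Finset.mem_image.mpr ⟨(c, j), ?_, ?_⟩)
    · simp [Finset.mem_product, Finset.mem_range]; omega
    · unfold Φ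
      simp only
      rw [← h1, ← h2]
  · rintro x hx
    obtain ⟨⟨c, j⟩, hcj, rfl⟩ := Finset.mem_image.mp (Finset.mem_coe.mp hx)
    simp only [Finset.mem_product, Finset.mem_range] at hcj
    have hc : c ≤ d₀ := by omega
    have hM : q ≤ Nc b d₀ r₀ c := by unfold Nc; omega
    exact Φ_mem_Rset hc (A_le hq2 hM (by omega))

lemma injOn_layers (hq2 : 2 ≤ q) (hcmax : ∀ c j, (c, j) ∈ s → c ≤ q - 1 ∧ j < q + 1 ∧ q ≤ Nc b d₀ r₀ c) :
    Set.InjOn (Φ q b d₀ r₀) ↑(s : Finset (ℕ × ℕ)) := by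
  rintro ⟨x1, x2⟩ hx ⟨y1, y2⟩ hy h
  obtain ⟨hx1, hx2, hxM⟩ := hcmax x1 x2 (Finset.mem_coe.mp hx)
  obtain ⟨hy1, hy2, hyM⟩ := hcmax y1 y2 (Finset.mem_coe.mp hy)
  have h2 := congrFun h 2
  simp only [Φ_two] at h2
  have hc1 : x1 = y1 := by
    rw [red_eq_self hx1, red_eq_self hy1] at h2; exact h2
  subst hc1
  have h0 := congrFun h 0
  have h1 := congrFun h 1
  simp only [Φ_zero, Φ_one] at h0 h1
  have := inj_layer hq2 hxM hx2 hy2 h0 h1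
  rw [this]

lemma ncard₂ (hq2 : 2 ≤ q) (hqb : q ≤ b) (hd₀ : d₀ ≤ q - 1) (hqr : q ≤ r₀) (hr : r₀ < b) :
    (Rset q b (d₀ * b + r₀)).ncard = (d₀ + 1) * (q + 1) := by
  rw [Rset_eq₂ hq2 hqb hqr hr, Set.ncard_coe_finset]
  rw [Finset.card_image_of_injOn]
  · rw [Finset.card_product, Finset.card_range, Finset.card_range]
  · apply injOn_layers hq2
    intro c j hcj
    simp only [Finset.mem_product, Finset.mem_range] at hcj
    refine ⟨by omega, by omega, ?_⟩
    unfold Nc; omega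

end HilbAux

namespace HilbAux

variable {q b d₀ r₀ : ℕ}

lemma Rset_eq₁ (hq2 : 2 ≤ q) (hqb : q ≤ b) (hd₀ : d₀ ≤ q - 1) (hr₀ : r₀ ≤ q - 1)
    (hr : r₀ < b) :
    Rset q b (d₀ * b + r₀) =
      ↑((Finset.range d₀ ×ˢ Finset.range (q+1) ∪ {d₀} ×ˢ Finset.range (r₀+1)).image
        (Φ q b d₀ r₀)) := by
  have hb0 : 0 < b := by omega
  have hNcd : Nc b d₀ r₀ d₀ = r₀ := by unfold Nc; simp
  apply Set.Subset.antisymm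
  · rintro e ⟨a, a', c, h, rfl⟩
    have hc : c ≤ d₀ := c_le_d0 hb0 hr h
    have hsum : a + a' = Nc b d₀ r₀ c := sum_eq_Nc hb0 hr h
    by_cases hcd : c < d₀
    · have hM : q ≤ Nc b d₀ r₀ c := q_le_Nc hqb hcd
      obtain ⟨j, hj, h1, h2⟩ := pair_param hq2 hM (by omega) (Nat.ModEq.refl _) hsum
      refine Finset.mem_coe.mpr (Finset.mem_image.mpr ⟨(c, j), ?_, ?_⟩)
      · simp only [Finset.mem_union, Finset.mem_product, Finset.mem_range]
        left; exact ⟨by omega, by omega⟩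
      · unfold Φ; simp only; rw [← h1, ← h2]
    · have hcd₀ : c = d₀ := by omega
      rw [hcd₀] at hsum ⊢
      rw [hNcd] at hsum
      have ha : a ≤ r₀ := by omega
      have eA : A q (Nc b d₀ r₀ d₀) a = a := by unfold A; rw [if_neg (by omega)]
      refine Finset.mem_coe.mpr (Finset.mem_image.mpr ⟨(d₀, a), ?_, ?_⟩)
      · simp only [Finset.mem_union, Finset.mem_product, Finset.mem_range,
          Finset.mem_singleton]
        right; exact ⟨trivial, by omega⟩
      · unfold Φ; simp only; rw [eA, hNcd]
        have : r₀ - a = a' := by omega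
        rw [this]
  · rintro x hx
    obtain ⟨⟨c, j⟩, hcj, rfl⟩ := Finset.mem_image.mp (Finset.mem_coe.mp hx)
    simp only [Finset.mem_union, Finset.mem_product, Finset.mem_range,
      Finset.mem_singleton] at hcj
    rcases hcj with ⟨hc, hj⟩ | ⟨hc, hj⟩
    · exact Φ_mem_Rset (by omega) (A_le hq2 (q_le_Nc hqb hc) hj)
    · rw [hc]
      have hA : A q (Nc b d₀ r₀ d₀) j ≤ Nc b d₀ r₀ d₀ := by
        have e : A q (Nc b d₀ r₀ d₀) j = j := by unfold A; rw [if_neg (by omega)]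
        rw [e, hNcd]; omega
      exact Φ_mem_Rset le_rfl hA

lemma ncard₁ (hq2 : 2 ≤ q) (hqb : q ≤ b) (hd₀ : d₀ ≤ q - 1) (hr₀ : r₀ ≤ q - 1)
    (hr : r₀ < b) :
    (Rset q b (d₀ * b + r₀)).ncard = d₀ * (q + 1) + r₀ + 1 := by
  have hNcd : Nc b d₀ r₀ d₀ = r₀ := by unfold Nc; simp
  rw [Rset_eq₁ hq2 hqb hd₀ hr₀ hr, Set.ncard_coe_finset]
  rw [Finset.card_image_of_injOn]
  · rw [Finset.card_union_of_disjoint, Finset.card_product, Finset.card_product,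
      Finset.card_range, Finset.card_range, Finset.card_range, Finset.card_singleton]
    · ring
    · rw [Finset.disjoint_left]
      rintro ⟨c, j⟩ hx hy
      simp only [Finset.mem_product, Finset.mem_range, Finset.mem_singleton] at hx hy
      omega
  · rintro ⟨x1, x2⟩ hx ⟨y1, y2⟩ hy h
    simp only [Finset.coe_union, Finset.coe_product, Finset.coe_singleton, Set.mem_union,
      Set.mem_prod, Set.mem_singleton_iff, Finset.mem_coe, Finset.coe_range,
      Set.mem_Iio] at hx hy
    have h2 := congrFun h 2
    simp only [Φ_two] at h2
    have hx1q : x1 ≤ q - 1 := by rcases hx with ⟨h', _⟩ | ⟨h', _⟩ <;> omega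
    have hy1q : y1 ≤ q - 1 := by rcases hy with ⟨h', _⟩ | ⟨h', _⟩ <;> omega
    have hc1 : x1 = y1 := by rw [red_eq_self hx1q, red_eq_self hy1q] at h2; exact h2
    subst hc1
    have h0 := congrFun h 0
    have h1 := congrFun h 1
    simp only [Φ_zero, Φ_one] at h0 h1
    rcases hx with ⟨hxd, hx2⟩ | ⟨hxd, hx2⟩
    · rcases hy with ⟨_, hy2⟩ | ⟨hyd, hy2⟩
      · have := inj_layer hq2 (q_le_Nc hqb hxd) hx2 hy2 h0 h1
        rw [this]
      · omega
    · rcases hy with ⟨hyd, hy2⟩ | ⟨hyd, hy2⟩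
      · omega
      · -- small layer : x1 = d₀, exponents ≤ r₀
        have ex : A q (Nc b d₀ r₀ x1) x2 = x2 := by unfold A; rw [if_neg (by omega)]
        have ey : A q (Nc b d₀ r₀ x1) y2 = y2 := by unfold A; rw [if_neg (by omega)]
        rw [ex, ey, red_eq_self (by omega), red_eq_self (by omega)] at h0
        rw [h0]

lemma Nc_cong (hq2 : 2 ≤ q) {c v : ℕ} (hc : c ≤ d₀) (hv : v ≤ d₀)
    (hcv : c ≡ v [MOD q - 1]) : Nc b d₀ r₀ c ≡ Nc b d₀ r₀ v [MOD q - 1] := by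
  have e1 : (d₀ - c) * b + c * b = d₀ * b := by rw [← Nat.add_mul, Nat.sub_add_cancel hc]
  have e2 : (d₀ - v) * b + v * b = d₀ * b := by rw [← Nat.add_mul, Nat.sub_add_cancel hv]
  have h3 : (d₀ - c) * b + v * b ≡ (d₀ - c) * b + c * b [MOD q - 1] :=
    Nat.ModEq.add_left _ ((hcv.mul_right b).symm)
  rw [e1, ← e2] at h3
  have h4 : (d₀ - c) * b ≡ (d₀ - v) * b [MOD q - 1] := Nat.ModEq.add_right_cancel' _ h3
  exact h4.add_right r₀

lemma red_modeq' (c : ℕ) : c ≡ red q c [MOD q - 1] := by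
  rcases Nat.eq_zero_or_pos c with rfl | hc
  · exact Nat.ModEq.refl _
  · exact (red_modeq (by omega)).symm

lemma Rset_eq₃ (hq2 : 2 ≤ q) (hqb : q ≤ b) (hqd : q ≤ d₀) (hr1 : 1 ≤ r₀) (hr : r₀ < b) :
    Rset q b (d₀ * b + r₀) =
      ↑((Finset.range q ×ˢ Finset.range (q+1)).image (Φ q b d₀ r₀)) := by
  have hb0 : 0 < b := by omega
  apply Set.Subset.antisymm
  · rintro e ⟨a, a', c, h, rfl⟩
    have hc : c ≤ d₀ := c_le_d0 hb0 hr h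
    have hsum : a + a' = Nc b d₀ r₀ c := sum_eq_Nc hb0 hr h
    set v := red q c with hv
    have hvq : v ≤ q - 1 := red_le hq2 c
    have hvd : v < d₀ := by omega
    have hM : q ≤ Nc b d₀ r₀ v := q_le_Nc hqb hvd
    have hN : 1 ≤ Nc b d₀ r₀ c := by unfold Nc; omega
    have hcong : Nc b d₀ r₀ c ≡ Nc b d₀ r₀ v [MOD q - 1] :=
      Nc_cong hq2 hc (by omega) (red_modeq' c)
    obtain ⟨j, hj, h1, h2⟩ := pair_param hq2 hM hN hcong hsum
    refine Finset.mem_coe.mpr (Finset.mem_image.mpr ⟨(v, j), ?_, ?_⟩)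
    · simp only [Finset.mem_product, Finset.mem_range]; omega
    · unfold Φ; simp only; rw [← h1, ← h2, red_eq_self hvq]
  · rintro x hx
    obtain ⟨⟨c, j⟩, hcj, rfl⟩ := Finset.mem_image.mp (Finset.mem_coe.mp hx)
    simp only [Finset.mem_product, Finset.mem_range] at hcj
    exact Φ_mem_Rset (by omega) (A_le hq2 (q_le_Nc hqb (by omega)) (by omega))

lemma ncard₃ (hq2 : 2 ≤ q) (hqb : q ≤ b) (hqd : q ≤ d₀) (hr1 : 1 ≤ r₀) (hr : r₀ < b) :
    (Rset q b (d₀ * b + r₀)).ncard = q * (q + 1) := by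
  rw [Rset_eq₃ hq2 hqb hqd hr1 hr, Set.ncard_coe_finset]
  rw [Finset.card_image_of_injOn]
  · rw [Finset.card_product, Finset.card_range, Finset.card_range]
  · apply injOn_layers hq2
    intro c j hcj
    simp only [Finset.mem_product, Finset.mem_range] at hcj
    exact ⟨by omega, by omega, q_le_Nc hqb (by omega)⟩

end HilbAux

namespace HilbAux

variable {q b d₀ r₀ : ℕ}

lemma Rset_eq₄ (hq2 : 2 ≤ q) (hqb : q ≤ b) (hqd : q ≤ d₀) (hr0 : r₀ = 0) :
    Rset q b (d₀ * b + r₀) =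
      ↑(((Finset.range q ×ˢ Finset.range (q+1)) ∪ {(d₀, 0)}).image (Φ q b d₀ r₀)) := by
  have hb0 : 0 < b := by omega
  have hr : r₀ < b := by omega
  have hNcd : Nc b d₀ r₀ d₀ = 0 := by unfold Nc; simp [hr0]
  apply Set.Subset.antisymm
  · rintro e ⟨a, a', c, h, rfl⟩
    have hc : c ≤ d₀ := c_le_d0 hb0 hr h
    have hsum : a + a' = Nc b d₀ r₀ c := sum_eq_Nc hb0 hr h
    by_cases hcd : c < d₀
    · set v := red q c with hv
      have hvq : v ≤ q - 1 := red_le hq2 c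
      have hvd : v < d₀ := by omega
      have hM : q ≤ Nc b d₀ r₀ v := q_le_Nc hqb hvd
      have hN : 1 ≤ Nc b d₀ r₀ c := by have := q_le_Nc (r₀ := r₀) hqb hcd; omega
      have hcong : Nc b d₀ r₀ c ≡ Nc b d₀ r₀ v [MOD q - 1] :=
        Nc_cong hq2 hc (by omega) (red_modeq' c)
      obtain ⟨j, hj, h1, h2⟩ := pair_param hq2 hM hN hcong hsum
      refine Finset.mem_coe.mpr (Finset.mem_image.mpr ⟨(v, j), ?_, ?_⟩)
      · simp only [Finset.mem_union, Finset.mem_product, Finset.mem_range]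
        left; exact ⟨by omega, by omega⟩
      · unfold Φ; simp only; rw [← h1, ← h2, red_eq_self hvq]
    · have hcd₀ : c = d₀ := by omega
      rw [hcd₀] at hsum ⊢
      rw [hNcd] at hsum
      have ha : a = 0 := by omega
      have ha' : a' = 0 := by omega
      rw [ha, ha']
      refine Finset.mem_coe.mpr (Finset.mem_image.mpr ⟨(d₀, 0), ?_, ?_⟩)
      · simp only [Finset.mem_union, Finset.mem_singleton, Finset.mem_product,
          Finset.mem_range, Prod.mk.injEq]
        right; trivial
      · unfold Φ; simp only
        have e0 : A q (Nc b d₀ r₀ d₀) 0 = 0 := by unfold A; rw [if_neg (by omega)]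
        rw [e0, hNcd]
  · rintro x hx
    obtain ⟨⟨c, j⟩, hcj, rfl⟩ := Finset.mem_image.mp (Finset.mem_coe.mp hx)
    simp only [Finset.mem_union, Finset.mem_product, Finset.mem_range,
      Finset.mem_singleton, Prod.mk.injEq] at hcj
    rcases hcj with ⟨hc, hj⟩ | ⟨hc, hj⟩
    · exact Φ_mem_Rset (by omega) (A_le hq2 (q_le_Nc hqb (by omega)) (by omega))
    · rw [hc, hj]
      have e0 : A q (Nc b d₀ r₀ d₀) 0 = 0 := by unfold A; rw [if_neg (by omega)]
      exact Φ_mem_Rset le_rfl (by rw [e0]; omega)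

lemma ncard₄ (hq2 : 2 ≤ q) (hqb : q ≤ b) (hqd : q ≤ d₀) (hr0 : r₀ = 0) :
    (Rset q b (d₀ * b + r₀)).ncard = q * (q + 1) + 1 := by
  have hNcd : Nc b d₀ r₀ d₀ = 0 := by unfold Nc; simp [hr0]
  have e0 : A q (Nc b d₀ r₀ d₀) 0 = 0 := by unfold A; rw [if_neg (by omega)]
  -- a point of a full layer never has both first coordinates zero
  have key : ∀ v j, v < q → j < q + 1 →
      ¬(red q (A q (Nc b d₀ r₀ v) j) = 0 ∧
        red q (Nc b d₀ r₀ v - A q (Nc b d₀ r₀ v) j) = 0) := by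
    intro v j hv hj hcontra
    obtain ⟨hA0, hB0⟩ := hcontra
    have hM : q ≤ Nc b d₀ r₀ v := q_le_Nc hqb (by omega)
    by_cases hjq : j = q
    · have eA : A q (Nc b d₀ r₀ v) j = Nc b d₀ r₀ v := by unfold A; rw [if_pos hjq]
      rw [eA] at hA0
      have := red_pos (q := q) (show Nc b d₀ r₀ v ≠ 0 by omega)
      omega
    · have eA : A q (Nc b d₀ r₀ v) j = j := by unfold A; rw [if_neg hjq]
      rw [eA] at hA0 hB0
      rcases Nat.eq_zero_or_pos j with hj0 | hj0
      · rw [hj0, Nat.sub_zero] at hB0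
        have := red_pos (q := q) (show Nc b d₀ r₀ v ≠ 0 by omega)
        omega
      · rw [red_eq_self (by omega)] at hA0
        omega
  rw [Rset_eq₄ hq2 hqb hqd hr0, Set.ncard_coe_finset]
  rw [Finset.card_image_of_injOn]
  · rw [Finset.card_union_of_disjoint, Finset.card_product, Finset.card_range,
      Finset.card_range, Finset.card_singleton]
    rw [Finset.disjoint_left]
    rintro ⟨c, j⟩ hx hy
    simp only [Finset.mem_product, Finset.mem_range, Finset.mem_singleton,
      Prod.mk.injEq] at hx hy
    omega
  · rintro ⟨x1, x2⟩ hx ⟨y1, y2⟩ hy h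
    simp only [Finset.coe_union, Set.mem_union, Finset.mem_coe, Finset.mem_product,
      Finset.mem_range, Finset.mem_singleton, Finset.coe_singleton,
      Set.mem_singleton_iff, Prod.mk.injEq] at hx hy
    have h0 := congrFun h 0
    have h1 := congrFun h 1
    have h2 := congrFun h 2
    simp only [Φ_zero, Φ_one, Φ_two] at h0 h1 h2
    rcases hx with ⟨hx1, hx2⟩ | ⟨hx1, hx2⟩
    · rcases hy with ⟨hy1, hy2⟩ | ⟨hy1, hy2⟩
      · have hc1 : x1 = y1 := by
          rw [red_eq_self (by omega), red_eq_self (by omega)] at h2; exact h2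
        subst hc1
        have := inj_layer hq2 (q_le_Nc hqb (by omega)) (by omega) (by omega) h0 h1
        rw [this]
      · exfalso
        rw [hy1, hy2, e0] at h0 h1
        rw [Nat.sub_zero, hNcd] at h1
        exact key x1 x2 (by omega) (by omega) ⟨h0.trans red_zero, h1.trans red_zero⟩
    · rcases hy with ⟨hy1, hy2⟩ | ⟨hy1, hy2⟩
      · exfalso
        rw [hx1, hx2, e0] at h0 h1
        rw [Nat.sub_zero, hNcd] at h1
        exact key y1 y2 (by omega) (by omega)
          ⟨(h0.symm.trans red_zero), (h1.symm.trans red_zero)⟩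
      · rw [hx1, hx2, hy1, hy2]

end HilbAux

namespace HilbAux

open MvPolynomial

noncomputable section

lemma two_le_card : 2 ≤ Fintype.card F := Fintype.one_lt_card

lemma pow_red (t : F) (m : ℕ) : t ^ m = t ^ red (Fintype.card F) m := by
  have hq2 : 2 ≤ Fintype.card F := two_le_card F
  rcases eq_or_ne m 0 with rfl | hm
  · simp
  · unfold red; rw [if_neg hm]
    rcases eq_or_ne t 0 with rfl | ht
    · rw [zero_pow hm, zero_pow (by omega)]
    · have h1 : t ^ (Fintype.card F - 1) = 1 := FiniteField.pow_card_sub_one_eq_one t ht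
      conv_lhs => rw [show m = (m - 1) + 1 by omega]
      rw [pow_succ, pow_succ]
      congr 1
      conv_lhs => rw [show m - 1 =
        (Fintype.card F - 1) * ((m - 1) / (Fintype.card F - 1)) +
          (m - 1) % (Fintype.card F - 1) from (Nat.div_add_mod _ _).symm]
      rw [pow_add, pow_mul, h1, one_pow, one_mul]

/-- the function `y ↦ ∏ yᵢ^{eᵢ}` -/
def mon (e : Fin 3 → ℕ) : (Fin 3 → F) → F := fun y => ∏ i, y i ^ e i

lemma mon_red (e : Fin 3 → ℕ) :
    mon F (fun i => red (Fintype.card F) (e i)) = mon F e := by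
  funext y
  exact Finset.prod_congr rfl fun i _ => (pow_red F (y i) (e i)).symm

/-- the reduced monomial functions, indexed by reduced exponent vectors -/
def φfam (e : Fin 3 → Fin (Fintype.card F)) : (Fin 3 → F) → F :=
  mon F fun i => (e i : ℕ)

lemma evalf_mem_span (p : MvPolynomial (Fin 3) F) :
    (fun y => eval y p) ∈ Submodule.span F (Set.range (φfam F)) := by
  have hq2 : 2 ≤ Fintype.card F := two_le_card F
  have hrepr : (fun y => eval y p)
      = ∑ m ∈ p.support, (MvPolynomial.coeff m p) • mon F (fun i => m i) := by
    funext y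
    rw [Finset.sum_apply]
    simp only [Pi.smul_apply, smul_eq_mul, mon]
    exact eval_eq' y p
  rw [hrepr]
  refine Submodule.sum_mem _ fun m _ => Submodule.smul_mem _ _ ?_
  rw [← mon_red]
  exact Submodule.subset_span
    ⟨fun i => ⟨red (Fintype.card F) (m i), red_lt hq2 _⟩, rfl⟩

lemma span_top : ⊤ ≤ Submodule.span F (Set.range (φfam F)) := by
  intro f _
  have hmap := MvPolynomial.map_restrict_dom_evalₗ F (Fin 3)
  have hf : f ∈ (MvPolynomial.restrictDegree (Fin 3) F (Fintype.card F - 1)).map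
      (MvPolynomial.evalₗ F (Fin 3)) := by rw [hmap]; trivial
  obtain ⟨p, -, hp⟩ := Submodule.mem_map.mp hf
  rw [← hp]
  exact evalf_mem_span F p

lemma li_φfam : LinearIndependent F (φfam F) := by
  apply linearIndependent_of_top_le_span_of_card_eq_finrank (span_top F)
  rw [Module.finrank_fintype_fun_eq_card]
  simp [Fintype.card_fun]

/-- linear independence of reduced monomial functions indexed by a set of exponent vectors -/
lemma li_mon {s : Set (Fin 3 → ℕ)} (hs : ∀ e ∈ s, ∀ i, e i < Fintype.card F) :
    LinearIndependent F (fun e : s => mon F (e : Fin 3 → ℕ)) := by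
  have : (fun e : s => mon F (e : Fin 3 → ℕ)) =
      (φfam F) ∘ (fun e : s => fun i => (⟨(e : Fin 3 → ℕ) i, hs e e.2 i⟩ :
        Fin (Fintype.card F))) := rfl
  rw [this]
  apply (li_φfam F).comp
  intro e e' h
  apply Subtype.ext
  funext i
  have := congrFun h i
  simpa [Fin.ext_iff] using this

end

end HilbAux

namespace HilbAux

variable {b d : ℕ}

lemma weight_eq (b : ℕ) (m : Fin 3 →₀ ℕ) :
    (Finsupp.weight ![1, 1, b]) m = m 0 + m 1 + b * m 2 := by
  rw [Finsupp.weight_apply, Finsupp.sum_fintype _ _ (by simp)]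
  simp [Fin.sum_univ_three]
  ring

/-- the set of exponent multi-indices of weighted degree `d` -/
def Md (b d : ℕ) : Set (Fin 3 →₀ ℕ) := {m | m 0 + m 1 + b * m 2 = d}

lemma Sd_eq_span (b d : ℕ) :
    Sd F b d = Submodule.span F
      ((fun m : Fin 3 →₀ ℕ => (monomial m (1 : F))) '' Md b d) := by
  apply le_antisymm
  · intro p hp
    rw [Sd, mem_weightedHomogeneousSubmodule] at hp
    have hrepr := (p.as_sum)
    rw [hrepr]
    refine Submodule.sum_mem _ fun m hm => ?_
    have hw : (Finsupp.weight ![1, 1, b]) m = d := hp (mem_support_iff.mp hm)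
    have hmem : m ∈ Md b d := by rw [Md, Set.mem_setOf_eq, ← weight_eq b m]; exact hw
    have : monomial m (MvPolynomial.coeff m p)
        = (MvPolynomial.coeff m p) • monomial m (1 : F) := by
      rw [MvPolynomial.smul_monomial, smul_eq_mul, mul_one]
    rw [this]
    exact Submodule.smul_mem _ _ (Submodule.subset_span ⟨m, hmem, rfl⟩)
  · rw [Submodule.span_le]
    rintro _ ⟨m, hm, rfl⟩
    rw [SetLike.mem_coe, Sd, mem_weightedHomogeneousSubmodule]
    exact isWeightedHomogeneous_monomial _ _ _ (by rw [weight_eq b m]; exact hm)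

lemma Md_finite (hb : 0 < b) : (Md b d).Finite := by
  have hfin : Set.Finite {f : Fin 3 → ℕ | ∀ i, f i ≤ d} := by
    have : {f : Fin 3 → ℕ | ∀ i, f i ≤ d} = Set.pi Set.univ (fun _ => Set.Iic d) := by
      ext f; simp only [Set.mem_pi, Set.mem_setOf_eq, Set.mem_univ, Set.mem_Iic,
        forall_const]
    rw [this]
    exact Set.Finite.pi fun _ => Set.finite_Iic d
  have hsub : Md b d ⊆ (fun m : Fin 3 →₀ ℕ => (m : Fin 3 → ℕ)) ⁻¹'
      {f : Fin 3 → ℕ | ∀ i, f i ≤ d} := by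
    rintro m hm i
    rw [Md, Set.mem_setOf_eq] at hm
    have h2 : m 2 ≤ b * m 2 := Nat.le_mul_of_pos_left _ hb
    fin_cases i <;> simp <;> omega
  exact Set.Finite.subset (Set.Finite.preimage
    ((DFunLike.coe_injective (F := (Fin 3 →₀ ℕ))).injOn) hfin) hsub

lemma Sd_findim (hb : 0 < b) : FiniteDimensional F ↥(Sd F b d) := by
  rw [Sd_eq_span F b d]
  exact FiniteDimensional.span_of_finite F ((Md_finite hb).image _)

end HilbAux

namespace HilbAux

noncomputable section

open MvPolynomial

/-- restriction of a function on `F³` to the nonzero points -/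
def π' : ((Fin 3 → F) → F) →ₗ[F] ({y : Fin 3 → F // y ≠ 0} → F) :=
  LinearMap.funLeft F F Subtype.val

/-- evaluation of polynomials on the nonzero points, as a linear map -/
def Lmap : MvPolynomial (Fin 3) F →ₗ[F] ({y : Fin 3 → F // y ≠ 0} → F) :=
  (π' F).comp (evalₗ F (Fin 3))

lemma mem_vanishing {p : MvPolynomial (Fin 3) F} :
    p ∈ vanishing F ↔ ∀ y : Fin 3 → F, y ≠ 0 → eval y p = 0 := Iff.rfl

lemma vanishing_eq_ker : vanishing F = LinearMap.ker (Lmap F) := by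
  ext p
  rw [mem_vanishing, LinearMap.mem_ker]
  constructor
  · intro hp
    funext z
    exact hp z.1 z.2
  · intro hp y hy
    exact congrFun hp ⟨y, hy⟩

lemma Id'_finrank_eq (b d : ℕ) :
    Module.finrank F ↥(Id' F b d)
      = Module.finrank F ↥(LinearMap.ker ((Lmap F).comp (Sd F b d).subtype)) := by
  rw [LinearMap.ker_comp]
  have h1 : Id' F b d = Submodule.map (Sd F b d).subtype
      (Submodule.comap (Sd F b d).subtype (LinearMap.ker (Lmap F))) := by
    rw [Submodule.map_comap_subtype, Id', vanishing_eq_ker]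
  rw [h1]
  exact (LinearEquiv.finrank_eq (Submodule.equivSubtypeMap _ _)).symm

lemma Lmap_monomial (m : Fin 3 →₀ ℕ) :
    Lmap F (monomial m (1 : F))
      = (π' F) (mon F (fun i => red (Fintype.card F) (m i))) := by
  have h2 : (evalₗ F (Fin 3)) (monomial m (1 : F)) = mon F (fun i => m i) := by
    funext y
    simp only [evalₗ_apply]
    rw [eval_monomial, one_mul, mon]
    exact Finsupp.prod_fintype _ _ (fun i => pow_zero _)
  show (π' F) ((evalₗ F (Fin 3)) (monomial m (1 : F))) = _
  rw [h2, ← mon_red F (fun i => m i)]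

lemma range_L' (b d : ℕ) :
    LinearMap.range ((Lmap F).comp (Sd F b d).subtype)
      = Submodule.span F
          ((fun e => (π' F) (mon F e)) '' Rset (Fintype.card F) b d) := by
  rw [LinearMap.range_comp, Submodule.range_subtype, Sd_eq_span, Submodule.map_span]
  congr 1
  rw [← Set.image_comp]
  apply Set.Subset.antisymm
  · rintro _ ⟨m, hm, rfl⟩
    refine ⟨fun i => red (Fintype.card F) (m i), ⟨m 0, m 1, m 2, hm, ?_⟩, ?_⟩
    · funext i; fin_cases i <;> rfl
    · exact (Lmap_monomial F m).symm
  · rintro _ ⟨e, ⟨a, a', c, h, rfl⟩, rfl⟩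
    refine ⟨Finsupp.equivFunOnFinite.symm ![a, a', c], ?_, ?_⟩
    · show (Finsupp.equivFunOnFinite.symm ![a, a', c]) 0
          + (Finsupp.equivFunOnFinite.symm ![a, a', c]) 1
          + b * (Finsupp.equivFunOnFinite.symm ![a, a', c]) 2 = d
      exact h
    · show Lmap F (monomial _ (1 : F)) = _
      rw [Lmap_monomial F]
      have he : (fun i => red (Fintype.card F) ((Finsupp.equivFunOnFinite.symm ![a, a', c]) i))
          = ![red (Fintype.card F) a, red (Fintype.card F) a', red (Fintype.card F) c] := by
        funext i; fin_cases i <;> rfl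
      exact congrArg (π' F) (congrArg (mon F) he)

lemma Rset_bounded (b d : ℕ) :
    ∀ e ∈ Rset (Fintype.card F) b d, ∀ i, e i < Fintype.card F := by
  rintro e ⟨a, a', c, h, rfl⟩ i
  have hq2 := two_le_card F
  fin_cases i
  · exact red_lt hq2 a
  · exact red_lt hq2 a'
  · exact red_lt hq2 c

lemma Rset_finite (b d : ℕ) : (Rset (Fintype.card F) b d).Finite := by
  have hfin : Set.Finite {f : Fin 3 → ℕ | ∀ i, f i < Fintype.card F} := by
    have : {f : Fin 3 → ℕ | ∀ i, f i < Fintype.card F}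
        = Set.pi Set.univ (fun _ => Set.Iio (Fintype.card F)) := by
      ext f
      simp only [Set.mem_pi, Set.mem_setOf_eq, Set.mem_univ, Set.mem_Iio, forall_const]
    rw [this]
    exact Set.Finite.pi fun _ => Set.finite_Iio _
  exact hfin.subset (fun e he => Rset_bounded F b d e he)

lemma HY_eq_ncard (b d : ℕ) (hb : 0 < b)
    (hdis : Disjoint
      (Submodule.span F (mon F '' Rset (Fintype.card F) b d))
      (LinearMap.ker (π' F))) :
    HY F b d = (Rset (Fintype.card F) b d).ncard := by
  classical
  haveI := Sd_findim F (b := b) (d := d) hb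
  haveI : Fintype ↥(Rset (Fintype.card F) b d) := (Rset_finite F b d).fintype
  have hrn := LinearMap.finrank_range_add_finrank_ker ((Lmap F).comp (Sd F b d).subtype)
  have hid := Id'_finrank_eq F b d
  have hli0 : LinearIndependent F
      (fun e : ↥(Rset (Fintype.card F) b d) => mon F (e : Fin 3 → ℕ)) :=
    li_mon F (Rset_bounded F b d)
  have hli : LinearIndependent F
      (fun e : ↥(Rset (Fintype.card F) b d) => (π' F) (mon F (e : Fin 3 → ℕ))) := by
    refine hli0.map ?_
    rwa [← Set.image_eq_range (mon F) (Rset (Fintype.card F) b d)]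
  have hspan : LinearMap.range ((Lmap F).comp (Sd F b d).subtype) = Submodule.span F
      (Set.range (fun e : ↥(Rset (Fintype.card F) b d) =>
        (π' F) (mon F (e : Fin 3 → ℕ)))) := by
    rw [range_L' F b d]
    congr 1
    exact Set.image_eq_range _ _
  have hfr : Module.finrank F ↥(LinearMap.range ((Lmap F).comp (Sd F b d).subtype))
      = Fintype.card ↥(Rset (Fintype.card F) b d) := by
    rw [hspan]
    exact finrank_span_eq_card hli
  have hcard : Fintype.card ↥(Rset (Fintype.card F) b d)
      = (Rset (Fintype.card F) b d).ncard :=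
    (Nat.card_eq_fintype_card).symm.trans (Nat.card_coe_set_eq _)
  unfold HY
  omega

end

end HilbAux

namespace HilbAux

noncomputable section

open MvPolynomial

lemma mon_apply_zero {e : Fin 3 → ℕ} (i : Fin 3) (hi : e i ≠ 0) :
    mon F e 0 = 0 := by
  rw [mon]
  apply Finset.prod_eq_zero (Finset.mem_univ i)
  rw [Pi.zero_apply]
  exact zero_pow hi

lemma dis_all (b d : ℕ) (hb : 0 < b) :
    Disjoint (Submodule.span F (mon F '' Rset (Fintype.card F) b d))
      (LinearMap.ker (π' F)) := by
  rw [Submodule.disjoint_def]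
  intro g hg hker
  have hvan : ∀ y : Fin 3 → F, y ≠ 0 → g y = 0 := fun y hy =>
    congrFun (LinearMap.mem_ker.mp hker) ⟨y, hy⟩
  have h0 : g 0 = 0 := by
    rcases Nat.eq_zero_or_pos d with rfl | hd
    · -- d = 0 : only the constant function 1 occurs
      have hR : mon F '' Rset (Fintype.card F) b 0 ⊆ {fun _ => (1 : F)} := by
        rintro _ ⟨e, ⟨a, a', c, hsum, rfl⟩, rfl⟩
        have hbc : b * c = 0 := by omega
        have hc : c = 0 := by
          rcases Nat.mul_eq_zero.mp hbc with h | h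
          · omega
          · exact h
        have ha : a = 0 := by omega
        have ha' : a' = 0 := by omega
        subst ha; subst ha'; subst hc
        have : mon F ![red (Fintype.card F) 0, red (Fintype.card F) 0,
            red (Fintype.card F) 0] = fun _ => (1 : F) := by
          funext y
          rw [mon]
          apply Finset.prod_eq_one
          intro i _
          fin_cases i <;> simp [red_zero]
        rw [this]
        rfl
      have hg' : g ∈ Submodule.span F {fun _ => (1 : F)} :=
        Submodule.span_mono hR hg
      obtain ⟨cc, hcc⟩ := Submodule.mem_span_singleton.mp hg'
      have hne : (fun _ => (1 : F)) ≠ (0 : Fin 3 → F) := fun h =>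
        one_ne_zero (congrFun h 0)
      have h1 : g (fun _ => 1) = 0 := hvan _ hne
      rw [← hcc] at h1
      simp only [Pi.smul_apply, smul_eq_mul, mul_one] at h1
      rw [← hcc]
      simp [h1]
    · -- d ≥ 1 : every occurring monomial function vanishes at 0
      have hle : Submodule.span F (mon F '' Rset (Fintype.card F) b d)
          ≤ LinearMap.ker (LinearMap.proj (0 : Fin 3 → F)) := by
        rw [Submodule.span_le]
        rintro _ ⟨e, ⟨a, a', c, hsum, rfl⟩, rfl⟩
        rw [SetLike.mem_coe, LinearMap.mem_ker, LinearMap.proj_apply]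
        by_cases ha : a = 0
        · by_cases ha' : a' = 0
          · have hbc : b * c = d := by omega
            have hc : c ≠ 0 := by
              rintro rfl
              rw [Nat.mul_zero] at hbc
              omega
            have hr : red (Fintype.card F) c ≠ 0 := by
              have := red_pos (q := Fintype.card F) hc; omega
            exact mon_apply_zero F 2 hr
          · have hr : red (Fintype.card F) a' ≠ 0 := by
              have := red_pos (q := Fintype.card F) ha'; omega
            exact mon_apply_zero F 1 hr
        · have hr : red (Fintype.card F) a ≠ 0 := by
            have := red_pos (q := Fintype.card F) ha; omega
          exact mon_apply_zero F 0 hr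
      simpa using hle hg
  funext y
  rcases eq_or_ne y 0 with rfl | hy
  · exact h0
  · exact hvan y hy

end

end HilbAux

/-- Theorem (Hilbert function of `ℙ(1,1,b)(F_q)` when `q ≤ b`): writing `d = d₀b + r₀`,
`0 ≤ r₀ < b`, the four stated case formulas hold. -/
theorem hilbert_function_P11b_of_q_le_b (q : ℕ) (hq : q = Fintype.card F)
    (b : ℕ) (hb : 0 < b) (hqb : q ≤ b) (d d₀ r₀ : ℕ)
    (hd : d = d₀ * b + r₀) (hr₀ : r₀ < b) :
    (d₀ ≤ q - 1 → r₀ ≤ q - 1 → HY F b d = d₀ * (q + 1) + r₀ + 1) ∧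
    (d₀ ≤ q - 1 → q ≤ r₀ → HY F b d = (d₀ + 1) * (q + 1)) ∧
    (q ≤ d₀ → 0 < r₀ → HY F b d = q * (q + 1)) ∧
    (q ≤ d₀ → r₀ = 0 → HY F b d = q * (q + 1) + 1) := by
  subst hq
  subst hd
  have hq2 : 2 ≤ Fintype.card F := HilbAux.two_le_card F
  refine ⟨?_, ?_, ?_, ?_⟩
  · intro h1 h2
    rw [HilbAux.HY_eq_ncard F b _ (by omega) (HilbAux.dis_all F b _ (by omega))]
    exact HilbAux.ncard₁ hq2 hqb h1 h2 hr₀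
  · intro h1 h2
    rw [HilbAux.HY_eq_ncard F b _ (by omega) (HilbAux.dis_all F b _ (by omega))]
    exact HilbAux.ncard₂ hq2 hqb h1 h2 hr₀
  · intro h1 h2
    rw [HilbAux.HY_eq_ncard F b _ (by omega) (HilbAux.dis_all F b _ (by omega))]
    exact HilbAux.ncard₃ hq2 hqb h1 h2 hr₀
  · intro h1 h2
    rw [HilbAux.HY_eq_ncard F b _ (by omega) (HilbAux.dis_all F b _ (by omega))]
    exact HilbAux.ncard₄ hq2 hqb h1 h2

end
end

section
/- Let q be a prime power, let b be a positive integer, and let H_Y be the Hilbert function of the set Y of F_q-rational points of P(1,1,b). Then for every natural number d with d ≥ qb + q − b, one has H_Y(d) = q(q+1) + 1 if b divides d, and H_Y(d) = q(q+1) otherwise. (That is, the Hilbert quasi-polynomial of Y, valid for all d > (q−1)(b+1), takes the value q(q+1)+1 on multiples of b and q(q+1) on non-multiples of b.) -/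
open MvPolynomial

noncomputable section

variable (F : Type) [Field F] [Fintype F]

/-!
Evaluation at the points of `F_q³ ∖ 0` identifies `S_d / I_d` with the space `W_d` of functions
that degree-`d` forms induce there, so `H_Y(d) = dim W_d`. A weighted homogeneous `f` of degree `d`
satisfies `f(λx₁, λx₂, λ^b x₃) = λ^d f(x)`, so `f` is determined by its values at the orbit
representatives `(1, a, c)`, `(0, 1, c)` and `(0, 0, 1)`; when `b ∤ d` the last one is not needed,
as no monomial of degree `d` is a pure power of `x₃`.

Conversely, for `d > (q - 1)(b + 1)` every representative carries a degree-`d` form that is `1`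
there and `0` at the other representatives. For `(1, a, c)` it is the indicator
`(1 - (x₂/x₁ - a)^(q-1)) (1 - (x₃/x₁^b - c)^(q-1))` of `(a, c)` in the chart `x₁ ≠ 0`, made
homogeneous by the factor `x₁^((q-1)(b+1))` and padded by `x₁^e` with `e ≥ 1` so that it vanishes
off the chart; the same construction in the chart `x₂ ≠ 0` handles `(0, 1, c)`, and for `b ∣ d`
subtracting such forms from `x₃^(d/b)` handles `(0, 0, 1)`. So the representatives interpolate
`W_d`, and `H_Y(d)` is their number: `q² + q`, plus one when `b ∣ d`.
-/

namespace P11b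

open Module

section General

variable {K V V' : Type*} [Field K] [AddCommGroup V] [Module K V] [AddCommGroup V'] [Module K V']

theorem finrank_map_add_finrank_inf_ker (f : V →ₗ[K] V') (S : Submodule K V)
    [FiniteDimensional K S] :
    finrank K (S.map f) + finrank K ↥(S ⊓ LinearMap.ker f) = finrank K S := by
  have h := (f.domRestrict S).finrank_range_add_finrank_ker
  have h_ker : (LinearMap.ker f).comap S.subtype = (S ⊓ LinearMap.ker f).comap S.subtype := by
    ext x
    simp
  rwa [LinearMap.range_domRestrict, LinearMap.ker_domRestrict, h_ker,
    (Submodule.comapSubtypeEquivOfLe inf_le_left).finrank_eq] at h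

theorem finrank_eq_card_of_interpolating {Y ι : Type*} [Fintype ι] [DecidableEq ι]
    (W : Submodule K (Y → K)) (p : ι → Y)
    (h_unique : ∀ g ∈ W, g ∘ p = 0 → g = 0)
    (h_exists : ∀ i, ∃ g ∈ W, g ∘ p = Pi.single i 1) :
    finrank K W = Fintype.card ι := by
  let φ : W →ₗ[K] ι → K := LinearMap.funLeft K K p ∘ₗ W.subtype
  have hinj : Function.Injective φ := by
    rw [← LinearMap.ker_eq_bot, eq_bot_iff]
    rintro ⟨g, hg⟩ h
    simpa using h_unique g hg h
  have hsurj : Function.Surjective φ := by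
    rw [← LinearMap.range_eq_top, eq_top_iff, ← (Pi.basisFun K ι).span_eq, Submodule.span_le]
    rintro _ ⟨i, rfl⟩
    obtain ⟨g, hg, hgp⟩ := h_exists i
    exact ⟨⟨g, hg⟩, by rw [Pi.basisFun_apply, ← hgp]; rfl⟩
  rw [(LinearEquiv.ofBijective φ ⟨hinj, hsurj⟩).finrank_eq, Module.finrank_fintype_fun_eq_card]

theorem _root_.MvPolynomial.IsWeightedHomogeneous.eval_weight_smul {σ R : Type*} [CommSemiring R]
    {w : σ → ℕ} {φ : MvPolynomial σ R} {n : ℕ} (hφ : φ.IsWeightedHomogeneous w n) (l : R)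
    (y : σ → R) : eval (fun i => l ^ w i * y i) φ = l ^ n * eval y φ := by
  rw [eval_eq, eval_eq, Finset.mul_sum]
  refine Finset.sum_congr rfl fun m hm => ?_
  rw [← hφ (mem_support_iff.mp hm), Finsupp.weight_apply, Finsupp.sum]
  simp_rw [mul_pow, Finset.prod_mul_distrib, ← pow_mul, Finset.prod_pow_eq_pow_sum, smul_eq_mul,
    mul_comm (w _)]
  ring

variable [Fintype K]

theorem one_sub_pow_card_sub_one [DecidableEq K] (x : K) :
    1 - x ^ (Fintype.card K - 1) = if x = 0 then 1 else 0 := by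
  split_ifs with hx
  · rw [hx, zero_pow (Nat.sub_ne_zero_of_lt Fintype.one_lt_card), sub_zero]
  · rw [FiniteField.pow_card_sub_one_eq_one x hx, sub_self]

theorem pow_mul_pow_card_sub_one_sub_one {e : ℕ} (he : e ≠ 0) (x : K) :
    x ^ e * (x ^ (Fintype.card K - 1) - 1) = 0 := by
  by_cases hx : x = 0
  · rw [hx, zero_pow he, zero_mul]
  · rw [FiniteField.pow_card_sub_one_eq_one x hx, sub_self, mul_zero]

end General

section Setting

variable {K : Type} [Field K] {b d : ℕ}

variable (K) in
def evalNonzero : MvPolynomial (Fin 3) K →ₗ[K] ({y : Fin 3 → K // y ≠ 0} → K) :=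
  LinearMap.funLeft K K Subtype.val ∘ₗ evalₗ K (Fin 3)

@[simp]
theorem evalNonzero_apply (f : MvPolynomial (Fin 3) K) (y : {y : Fin 3 → K // y ≠ 0}) :
    evalNonzero K f y = eval y.1 f := rfl

theorem mem_Sd {f : MvPolynomial (Fin 3) K} :
    f ∈ Sd K b d ↔ f.IsWeightedHomogeneous ![1, 1, b] d := Iff.rfl

theorem ker_evalNonzero : LinearMap.ker (evalNonzero K) = vanishing K := by
  ext f
  simp [funext_iff, vanishing]

theorem finiteDimensional_Sd (hb : 0 < b) (d : ℕ) : FiniteDimensional K (Sd K b d) :=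
  Module.Finite.iff_fg.mpr <|
    weightedHomogeneousSubmodule_fg K _ (by simp [Fin.forall_fin_succ]; omega) d

theorem HY_eq_finrank_map (hb : 0 < b) (d : ℕ) :
    HY K b d = finrank K ((Sd K b d).map (evalNonzero K)) := by
  have := finiteDimensional_Sd (K := K) hb d
  have h := finrank_map_add_finrank_inf_ker (evalNonzero K) (Sd K b d)
  rw [ker_evalNonzero] at h
  rw [HY, Id', ← h, Nat.add_sub_cancel]

end Setting

section Orbits

variable {K : Type} [Field K] {b d : ℕ} {f : MvPolynomial (Fin 3) K}

theorem weight_apply_fin_three (m : Fin 3 →₀ ℕ) :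
    Finsupp.weight ![1, 1, b] m = m 0 + m 1 + b * m 2 := by
  rw [Finsupp.weight_apply, Finsupp.sum_fintype _ _ (by simp), Fin.sum_univ_three]
  simp [mul_comm]

theorem eval_axis (hb : 0 < b) (hf : f ∈ Sd K b d) (t : K) :
    eval ![0, 0, t] f = coeff (Finsupp.single 2 (d / b)) f * t ^ (d / b) := by
  rw [eval_eq', Finset.sum_eq_single (Finsupp.single 2 (d / b))]
  · simp [Fin.prod_univ_three]
  · intro m hm hne
    have hw : m 0 + m 1 + b * m 2 = d := by
      rw [← weight_apply_fin_three, hf (mem_support_iff.mp hm)]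
    have h01 : m 0 ≠ 0 ∨ m 1 ≠ 0 := by
      by_contra! h
      refine hne (Finsupp.ext fun i => ?_)
      fin_cases i <;> simp [h.1, h.2, ← hw, Nat.mul_div_cancel_left _ hb]
    rcases h01 with h | h <;> simp [Fin.prod_univ_three, zero_pow h]
  · intro h
    rw [notMem_support_iff.mp h, zero_mul]

theorem coeff_axis_eq_zero (hf : f ∈ Sd K b d) (hbd : ¬ b ∣ d) :
    coeff (Finsupp.single 2 (d / b)) f = 0 :=
  IsWeightedHomogeneous.coeff_eq_zero hf _ <| by
    simpa [weight_apply_fin_three] using fun h => hbd ⟨d / b, h.symm⟩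

theorem eval_eq_zero_of_eval_orbit_reps (hb : 0 < b) (hf : f ∈ Sd K b d)
    (h_chart₀ : ∀ a c : K, eval ![1, a, c] f = 0)
    (h_chart₁ : ∀ c : K, eval ![0, 1, c] f = 0)
    (h_axis : b ∣ d → eval ![0, 0, 1] f = 0) (y : Fin 3 → K) :
    eval y f = 0 := by
  have h_smul (l : K) (z : Fin 3 → K) (hz : eval z f = 0)
      (hyz : y = fun i => l ^ (![1, 1, b] i) * z i) : eval y f = 0 := by
    rw [hyz, IsWeightedHomogeneous.eval_weight_smul hf, hz, mul_zero]
  by_cases h0 : y 0 = 0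
  · by_cases h1 : y 1 = 0
    · have hy2 : y = ![0, 0, y 2] := by
        ext i; fin_cases i <;> simp [h0, h1]
      rw [hy2, eval_axis hb hf]
      by_cases hbd : b ∣ d
      · have h_one := eval_axis hb hf 1
        rw [one_pow, mul_one] at h_one
        rw [← h_one, h_axis hbd, zero_mul]
      · rw [coeff_axis_eq_zero hf hbd, zero_mul]
    · refine h_smul (y 1) _ (h_chart₁ (y 2 / y 1 ^ b)) ?_
      ext i; fin_cases i <;> simp [h0, mul_div_cancel₀, h1]
  · refine h_smul (y 0) _ (h_chart₀ (y 1 / y 0) (y 2 / y 0 ^ b)) ?_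
    ext i; fin_cases i <;> simp [mul_div_cancel₀, h0]

variable (K) in
def orbitRep : (K × K) ⊕ K → {y : Fin 3 → K // y ≠ 0}
  | .inl (a, c) => ⟨![1, a, c], fun h => one_ne_zero (congrFun h 0)⟩
  | .inr c => ⟨![0, 1, c], fun h => one_ne_zero (congrFun h 1)⟩

variable (K) in
def axisRep : {y : Fin 3 → K // y ≠ 0} := ⟨![0, 0, 1], fun h => one_ne_zero (congrFun h 2)⟩

theorem evalNonzero_eq_zero_of_comp_orbitRep (hb : 0 < b) (hf : f ∈ Sd K b d)
    (h_free : evalNonzero K f ∘ orbitRep K = 0) (h_axis : b ∣ d → evalNonzero K f (axisRep K) = 0) : evalNonzero K f = 0 :=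
  funext fun y => eval_eq_zero_of_eval_orbit_reps hb hf (fun a c => congrFun h_free (.inl (a, c)))
    (fun c => congrFun h_free (.inr c)) h_axis y.1

end Orbits

section Interpolation

variable {K : Type} [Field K] {b d : ℕ}

def chartBump (b k e : ℕ) (u v : MvPolynomial (Fin 3) K) (a c : K) : MvPolynomial (Fin 3) K :=
  u ^ e * (u ^ k - (v - C a * u) ^ k) * (u ^ (b * k) - (X 2 - C c * u ^ b) ^ k)

theorem chartBump_mem {k e : ℕ} {u v : MvPolynomial (Fin 3) K} (hu : u ∈ Sd K b 1)
    (hv : v ∈ Sd K b 1) (a c : K) : chartBump b k e u v a c ∈ Sd K b (e + k + b * k) := by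
  have hX2 : (X 2 : MvPolynomial (Fin 3) K).IsWeightedHomogeneous ![1, 1, b] b :=
    isWeightedHomogeneous_X K _ 2
  have h_e : (u ^ e).IsWeightedHomogeneous ![1, 1, b] e := by simpa using hu.pow e
  have h_k : (u ^ k - (v - C a * u) ^ k).IsWeightedHomogeneous ![1, 1, b] k := by
    simpa using (hu.pow k).sub ((hv.sub (hu.C_mul a)).pow k)
  have h_bk : (u ^ (b * k) - (X 2 - C c * u ^ b) ^ k).IsWeightedHomogeneous ![1, 1, b] (b * k) := by
    have h_ub : (u ^ b).IsWeightedHomogeneous ![1, 1, b] b := by simpa using hu.pow b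
    have h_axis := (hX2.sub (h_ub.C_mul c)).pow k
    rw [smul_eq_mul, mul_comm k b] at h_axis
    have h_u : (u ^ (b * k)).IsWeightedHomogeneous ![1, 1, b] (b * k) := by simpa using hu.pow _
    exact h_u.sub h_axis
  exact (h_e.mul h_k).mul h_bk

variable [Fintype K]

def bump (b d : ℕ) : (K × K) ⊕ K → MvPolynomial (Fin 3) K :=
  let k := Fintype.card K - 1
  let e := d - (b + 1) * k
  fun
  | .inl (a, c) => chartBump b k e (X 0) (X 1) a c
  | .inr c => chartBump b k e (X 1) (X 0) 0 c

theorem bump_mem (hd : (b + 1) * (Fintype.card K - 1) ≤ d) (i : (K × K) ⊕ K) :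
    bump b d i ∈ Sd K b d := by
  have hdeg : d - (b + 1) * (Fintype.card K - 1) + (Fintype.card K - 1)
      + b * (Fintype.card K - 1) = d := by
    rw [add_mul, one_mul] at hd ⊢; omega
  have hX₀ : (X 0 : MvPolynomial (Fin 3) K) ∈ Sd K b 1 := isWeightedHomogeneous_X K _ 0
  have hX₁ : (X 1 : MvPolynomial (Fin 3) K) ∈ Sd K b 1 := isWeightedHomogeneous_X K _ 1
  rcases i with ⟨a, c⟩ | c
  · have h := chartBump_mem (k := Fintype.card K - 1) (e := d - (b + 1) * (Fintype.card K - 1))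
      hX₀ hX₁ a c
    rwa [hdeg] at h
  · have h := chartBump_mem (k := Fintype.card K - 1) (e := d - (b + 1) * (Fintype.card K - 1))
      hX₁ hX₀ 0 c
    rwa [hdeg] at h

theorem evalNonzero_bump_comp_orbitRep [DecidableEq K] (hd : (b + 1) * (Fintype.card K - 1) < d)
    (i : (K × K) ⊕ K) : evalNonzero K (bump b d i) ∘ orbitRep K = Pi.single i 1 := by
  have he : d - (b + 1) * (Fintype.card K - 1) ≠ 0 := by omega
  funext j
  rcases i with ⟨a, c⟩ | c <;> rcases j with ⟨a', c'⟩ | c'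
  · simp [bump, orbitRep, chartBump, one_sub_pow_card_sub_one, Pi.single_apply, sub_eq_zero,
      ← ite_and, and_comm]
  · simp [bump, orbitRep, chartBump, zero_pow he]
  · simp [bump, orbitRep, chartBump, pow_mul_pow_card_sub_one_sub_one he]
  · simp [bump, orbitRep, chartBump, one_sub_pow_card_sub_one, Pi.single_apply, sub_eq_zero]

theorem eval_axis_bump (hd : (b + 1) * (Fintype.card K - 1) < d) (i : (K × K) ⊕ K) :
    eval ![0, 0, 1] (bump b d i) = 0 := by
  have he : d - (b + 1) * (Fintype.card K - 1) ≠ 0 := by omega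
  rcases i with ⟨a, c⟩ | c <;> simp [bump, chartBump, zero_pow he]

variable (K) in
def axisBump (b d : ℕ) : MvPolynomial (Fin 3) K :=
  X 2 ^ (d / b) - ∑ j, C ((orbitRep K j).1 2 ^ (d / b)) * bump b d j

theorem axisBump_mem (hd : (b + 1) * (Fintype.card K - 1) ≤ d) (hbd : b ∣ d) :
    axisBump K b d ∈ Sd K b d := by
  refine Submodule.sub_mem _ ?_ (Submodule.sum_mem _ fun j _ => (bump_mem hd j).C_mul _)
  simpa [mem_Sd, Nat.div_mul_cancel hbd] using (isWeightedHomogeneous_X K ![1, 1, b] 2).pow (d / b)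

theorem eval_orbitRep_axisBump (hd : (b + 1) * (Fintype.card K - 1) < d) (i : (K × K) ⊕ K) :
    eval (orbitRep K i).1 (axisBump K b d) = 0 := by
  classical
  have h_bump (j : (K × K) ⊕ K) := congrFun (evalNonzero_bump_comp_orbitRep hd j) i
  simp only [Function.comp_apply, evalNonzero_apply] at h_bump
  simp only [axisBump, map_sub, map_pow, eval_X, map_sum, map_mul, eval_C, h_bump,
    Pi.single_apply, mul_ite, mul_one, mul_zero, Finset.sum_ite_eq, Finset.mem_univ, if_true,
    sub_self]

theorem eval_axis_axisBump (hd : (b + 1) * (Fintype.card K - 1) < d) :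
    eval ![0, 0, 1] (axisBump K b d) = 1 := by
  simp [axisBump, eval_axis_bump hd]

theorem finrank_map_evalNonzero_of_not_dvd (hb : 0 < b)
    (hd : (b + 1) * (Fintype.card K - 1) < d) (hbd : ¬ b ∣ d) :
    finrank K ((Sd K b d).map (evalNonzero K)) = Fintype.card ((K × K) ⊕ K) := by
  classical
  refine finrank_eq_card_of_interpolating _ (orbitRep K) ?_ fun i => ?_
  · rintro _ ⟨f, hf, rfl⟩ h_free
    exact evalNonzero_eq_zero_of_comp_orbitRep hb hf h_free (absurd · hbd)
  · exact ⟨_, Submodule.mem_map_of_mem (bump_mem hd.le i), evalNonzero_bump_comp_orbitRep hd i⟩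

theorem finrank_map_evalNonzero_of_dvd (hb : 0 < b)
    (hd : (b + 1) * (Fintype.card K - 1) < d) (hbd : b ∣ d) :
    finrank K ((Sd K b d).map (evalNonzero K)) = Fintype.card (Option ((K × K) ⊕ K)) := by
  classical
  refine finrank_eq_card_of_interpolating _ (fun o => o.elim (axisRep K) (orbitRep K)) ?_ ?_
  · rintro _ ⟨f, hf, rfl⟩ h
    exact evalNonzero_eq_zero_of_comp_orbitRep hb hf (funext fun j => congrFun h (some j))
      fun _ => congrFun h none
  · rintro (_ | i)
    · refine ⟨_, Submodule.mem_map_of_mem (axisBump_mem hd.le hbd), funext ?_⟩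
      rintro (_ | j)
      · simp [eval_axis_axisBump hd, axisRep]
      · simp [eval_orbitRep_axisBump hd]
    · refine ⟨_, Submodule.mem_map_of_mem (bump_mem hd.le i), funext ?_⟩
      rintro (_ | j)
      · simp [eval_axis_bump hd, axisRep]
      · simpa [Pi.single_apply] using congrFun (evalNonzero_bump_comp_orbitRep hd i) j

end Interpolation

end P11b

/-- Theorem (Hilbert quasi-polynomial of `Y = ℙ(1,1,b)(F_q)`): for every
`d ≥ qb + q − b` (i.e. `d > (q−1)(b+1)`), `H_Y(d) = q(q+1)+1` if `b ∣ d` and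
`H_Y(d) = q(q+1)` otherwise. -/
theorem hilbert_quasi_polynomial_P11b (q : ℕ) (hq : q = Fintype.card F)
    (b : ℕ) (hb : 0 < b) :
    ∀ d : ℕ, q * b + q - b ≤ d →
      HY F b d = if b ∣ d then q * (q + 1) + 1 else q * (q + 1) := by
  intro d hd
  have hd_large : (b + 1) * (Fintype.card F - 1) < d := by
    obtain ⟨k, rfl⟩ : ∃ k, q = k + 1 := Nat.exists_eq_add_one.mpr (hq ▸ Fintype.card_pos)
    rw [← hq, Nat.add_sub_cancel]
    ring_nf at hd ⊢
    omega
  rw [P11b.HY_eq_finrank_map hb]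
  split_ifs with hbd
  · rw [P11b.finrank_map_evalNonzero_of_dvd hb hd_large hbd, Fintype.card_option,
      Fintype.card_sum, Fintype.card_prod, ← hq]
    ring
  · rw [P11b.finrank_map_evalNonzero_of_not_dvd hb hd_large hbd, Fintype.card_sum,
      Fintype.card_prod, ← hq]
    ring

end
end
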